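/- arXiv:1301.6463 — 2 statements merged into one kernel-verified Lean document; each statement's English description precedes it below -/
import Mathlib

section
/- Let (x(t), ξ(t)) be a solution of the geodesic Hamiltonian system of H¹ on an interval I such that x = (x¹,x²,x³) is horizontally regular, i.e. (ẋ¹)² + (ẋ²)² > 0 on I. Then the T-variation of x vanishes identically, i.e. x¹ẋ² − ẋ¹x² + ẋ³ = 0 on I, and the p-curvature k(t) = (ẋ¹ẍ² − ẍ¹ẋ²)/((ẋ¹)² + (ẋ²)²)^{3/2} is constant on I. -/
/-!
Along a geodesic the horizontal velocity `v = (ẋ¹, ẋ²) = (ξ₁ + x²ξ₃, ξ₂ - x¹ξ₃)` satisfies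
`v̇ = -2ξ₃ J₀ v` with `ξ₃` constant: it rotates at constant angular speed, so `|v|` is constant
and `ẋ¹ẍ² - ẍ¹ẋ² = -2ξ₃ |v|²`, whence `k = -2ξ₃ / |v|` is constant.
-/

section Calculus

variable {𝕜 : Type*} [RCLike 𝕜] {F : Type*} [NormedAddCommGroup F] [NormedSpace 𝕜 F]
  {s : Set 𝕜} {f v : 𝕜 → F}

theorem IsOpen.exists_eqOn_const_of_hasDerivAt_zero (hs : IsOpen s) (hs' : IsPreconnected s)
    (hf : ∀ t ∈ s, HasDerivAt f 0 t) : ∃ c, ∀ t ∈ s, f t = c :=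
  hs.exists_is_const_of_deriv_eq_zero hs'
    (fun t ht => (hf t ht).differentiableAt.differentiableWithinAt)
    (fun t ht => (hf t ht).deriv)

theorem IsOpen.hasDerivAt_deriv_of_hasDerivAt (hs : IsOpen s)
    (hf : ∀ t ∈ s, HasDerivAt f (v t) t) {t : 𝕜} (ht : t ∈ s) {a : F}
    (hv : HasDerivAt v a t) : HasDerivAt (deriv f) a t :=
  hv.congr_of_eventuallyEq <|
    Filter.eventuallyEq_of_mem (hs.mem_nhds ht) fun u hu => (hf u hu).deriv

end Calculus

section PlaneCurve

variable {s : Set ℝ} {x₁ x₂ v₁ v₂ : ℝ → ℝ} {ω : ℝ}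

theorem hasDerivAt_sq_add_sq_of_rotation {t : ℝ} (hv₁ : HasDerivAt v₁ (ω * v₂ t) t)
    (hv₂ : HasDerivAt v₂ (-(ω * v₁ t)) t) :
    HasDerivAt (fun u => v₁ u ^ 2 + v₂ u ^ 2) 0 t :=
  ((hv₁.pow 2).add (hv₂.pow 2)).congr_deriv (by ring)

theorem exists_pCurvature_eq_of_rotation (hs : IsOpen s) (hs' : IsPreconnected s)
    (hx₁ : ∀ t ∈ s, HasDerivAt x₁ (v₁ t) t) (hx₂ : ∀ t ∈ s, HasDerivAt x₂ (v₂ t) t)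
    (hv₁ : ∀ t ∈ s, HasDerivAt v₁ (ω * v₂ t) t)
    (hv₂ : ∀ t ∈ s, HasDerivAt v₂ (-(ω * v₁ t)) t) :
    ∃ k₀ : ℝ, ∀ t ∈ s,
      (deriv x₁ t * deriv (deriv x₂) t - deriv (deriv x₁) t * deriv x₂ t)
          / ((deriv x₁ t) ^ 2 + (deriv x₂ t) ^ 2) ^ ((3 : ℝ) / 2) = k₀ := by
  obtain ⟨N, hN⟩ := hs.exists_eqOn_const_of_hasDerivAt_zero hs' fun t ht =>
    hasDerivAt_sq_add_sq_of_rotation (hv₁ t ht) (hv₂ t ht)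
  refine ⟨-ω * N / N ^ ((3 : ℝ) / 2), fun t ht => ?_⟩
  have hnum : v₁ t * -(ω * v₁ t) - ω * v₂ t * v₂ t = -ω * (v₁ t ^ 2 + v₂ t ^ 2) := by ring
  rw [(hx₁ t ht).deriv, (hx₂ t ht).deriv,
    (hs.hasDerivAt_deriv_of_hasDerivAt hx₁ ht (hv₁ t ht)).deriv,
    (hs.hasDerivAt_deriv_of_hasDerivAt hx₂ ht (hv₂ t ht)).deriv, hnum, hN t ht]

end PlaneCurve

section Heisenberg

variable {x₁ x₂ ξ₁ ξ₂ ξ₃ : ℝ → ℝ} {t : ℝ}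

theorem hasDerivAt_heisenbergVelocity₁ (hx₂ : HasDerivAt x₂ (ξ₂ t - x₁ t * ξ₃ t) t)
    (hξ₁ : HasDerivAt ξ₁ (ξ₂ t * ξ₃ t - x₁ t * (ξ₃ t) ^ 2) t) (hξ₃ : HasDerivAt ξ₃ 0 t) :
    HasDerivAt (fun u => ξ₁ u + x₂ u * ξ₃ u) (2 * ξ₃ t * (ξ₂ t - x₁ t * ξ₃ t)) t :=
  (hξ₁.add (hx₂.mul hξ₃)).congr_deriv (by ring)

theorem hasDerivAt_heisenbergVelocity₂ (hx₁ : HasDerivAt x₁ (ξ₁ t + x₂ t * ξ₃ t) t)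
    (hξ₂ : HasDerivAt ξ₂ (-(ξ₁ t * ξ₃ t) - x₂ t * (ξ₃ t) ^ 2) t) (hξ₃ : HasDerivAt ξ₃ 0 t) :
    HasDerivAt (fun u => ξ₂ u - x₁ u * ξ₃ u) (-(2 * ξ₃ t * (ξ₁ t + x₂ t * ξ₃ t))) t :=
  (hξ₂.sub (hx₁.mul hξ₃)).congr_deriv (by ring)

end Heisenberg

theorem geodesic_tVariation_zero_pCurvature_const_general
    (I : Set ℝ) (hIopen : IsOpen I) (hIinterval : I.OrdConnected)
    (x₁ x₂ x₃ ξ₁ ξ₂ ξ₃ : ℝ → ℝ)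
    (h₁ : ∀ t ∈ I, HasDerivAt x₁ (ξ₁ t + x₂ t * ξ₃ t) t)
    (h₂ : ∀ t ∈ I, HasDerivAt x₂ (ξ₂ t - x₁ t * ξ₃ t) t)
    (h₃ : ∀ t ∈ I, HasDerivAt x₃
      (x₂ t * ξ₁ t - x₁ t * ξ₂ t + ξ₃ t * ((x₁ t) ^ 2 + (x₂ t) ^ 2)) t)
    (h₄ : ∀ t ∈ I, HasDerivAt ξ₁ (ξ₂ t * ξ₃ t - x₁ t * (ξ₃ t) ^ 2) t)
    (h₅ : ∀ t ∈ I, HasDerivAt ξ₂ (-(ξ₁ t * ξ₃ t) - x₂ t * (ξ₃ t) ^ 2) t)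
    (h₆ : ∀ t ∈ I, HasDerivAt ξ₃ 0 t) :
    (∀ t ∈ I, x₁ t * deriv x₂ t - deriv x₁ t * x₂ t + deriv x₃ t = 0) ∧
    (∃ k₀ : ℝ, ∀ t ∈ I,
      (deriv x₁ t * deriv (deriv x₂) t - deriv (deriv x₁) t * deriv x₂ t)
          / ((deriv x₁ t) ^ 2 + (deriv x₂ t) ^ 2) ^ ((3 : ℝ) / 2) = k₀) := by
  refine ⟨fun t ht => ?_, ?_⟩
  · rw [(h₁ t ht).deriv, (h₂ t ht).deriv, (h₃ t ht).deriv]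
    ring
  obtain ⟨c, hc⟩ := hIopen.exists_eqOn_const_of_hasDerivAt_zero hIinterval.isPreconnected h₆
  refine exists_pCurvature_eq_of_rotation (ω := 2 * c) hIopen hIinterval.isPreconnected h₁ h₂
    (fun t ht => ?_) (fun t ht => ?_)
  · exact (hasDerivAt_heisenbergVelocity₁ (h₂ t ht) (h₄ t ht) (h₆ t ht)).congr_deriv
      (by rw [hc t ht])
  · exact (hasDerivAt_heisenbergVelocity₂ (h₁ t ht) (h₅ t ht) (h₆ t ht)).congr_deriv
      (by rw [hc t ht])

/-- **Geodesics of the Heisenberg group have vanishing T-variation and constant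
p-curvature.**  If `(x, ξ)` solves the geodesic Hamiltonian system of `H¹` on an open
interval `I` and `x` is horizontally regular there, then the T-variation
`x¹ẋ² - ẋ¹x² + ẋ³` vanishes identically on `I` and the p-curvature
`(ẋ¹ẍ² - ẍ¹ẋ²)/((ẋ¹)² + (ẋ²)²)^{3/2}` is constant on `I`. -/
theorem geodesic_tVariation_zero_pCurvature_const
    (I : Set ℝ) (hIopen : IsOpen I) (hIinterval : I.OrdConnected)
    (x₁ x₂ x₃ ξ₁ ξ₂ ξ₃ : ℝ → ℝ)
    (h₁ : ∀ t ∈ I, HasDerivAt x₁ (ξ₁ t + x₂ t * ξ₃ t) t)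
    (h₂ : ∀ t ∈ I, HasDerivAt x₂ (ξ₂ t - x₁ t * ξ₃ t) t)
    (h₃ : ∀ t ∈ I, HasDerivAt x₃
      (x₂ t * ξ₁ t - x₁ t * ξ₂ t + ξ₃ t * ((x₁ t) ^ 2 + (x₂ t) ^ 2)) t)
    (h₄ : ∀ t ∈ I, HasDerivAt ξ₁ (ξ₂ t * ξ₃ t - x₁ t * (ξ₃ t) ^ 2) t)
    (h₅ : ∀ t ∈ I, HasDerivAt ξ₂ (-(ξ₁ t * ξ₃ t) - x₂ t * (ξ₃ t) ^ 2) t)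
    (h₆ : ∀ t ∈ I, HasDerivAt ξ₃ 0 t)
    (hreg : ∀ t ∈ I, 0 < (deriv x₁ t) ^ 2 + (deriv x₂ t) ^ 2) :
    (∀ t ∈ I, x₁ t * deriv x₂ t - deriv x₁ t * x₂ t + deriv x₃ t = 0) ∧
    (∃ k₀ : ℝ, ∀ t ∈ I,
      (deriv x₁ t * deriv (deriv x₂) t - deriv (deriv x₁) t * deriv x₂ t)
          / ((deriv x₁ t) ^ 2 + (deriv x₂ t) ^ 2) ^ ((3 : ℝ) / 2) = k₀) :=
  geodesic_tVariation_zero_pCurvature_const_general I hIopen hIinterval x₁ x₂ x₃ ξ₁ ξ₂ ξ₃ h₁ h₂ h₃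
    h₄ h₅ h₆
end

section
/- Let F : U → H¹ and F̃ : Ũ → H¹ be normal parametrized surfaces and let φ(u,v) = (εu + g(v), h(v)) : U → Ũ be a diffeomorphism with F = F̃∘φ, where ε ∈ {1,−1} and g, h are smooth with h' ≠ 0. Then the coefficients of F and F̃ are related by a = ε(g' + h'·(ã∘φ)), b = ε h'·(b̃∘φ), c = h'·(c̃∘φ), l = ε(l̃∘φ), m = g'·(l̃∘φ) + h'·(m̃∘φ). Consequently the fundamental forms transform as φ*(dũ + ã dṽ) = ε(du + a dv), φ*(b̃ dṽ) = ε(b dv), φ*(c̃ dṽ) = c dv and φ*(l̃ dũ + m̃ dṽ) = l du + m dv. -/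
open Set Real
/-- Partial derivative in the `u`-direction of a function on `ℝ²`. -/
noncomputable def pu (f : ℝ × ℝ → ℝ) (p : ℝ × ℝ) : ℝ := fderiv ℝ f p (1, 0)

/-- Partial derivative in the `v`-direction of a function on `ℝ²`. -/
noncomputable def pv (f : ℝ × ℝ → ℝ) (p : ℝ × ℝ) : ℝ := fderiv ℝ f p (0, 1)

/-- `θ₀(F_u)` for a map `F = (F₁,F₂,F₃) : ℝ² → H¹`, where `θ₀ = dz + x dy - y dx`. -/
noncomputable def thetaU (F₁ F₂ F₃ : ℝ × ℝ → ℝ) (p : ℝ × ℝ) : ℝ :=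
  pu F₃ p + F₁ p * pu F₂ p - F₂ p * pu F₁ p

/-- `θ₀(F_v)` for a map `F = (F₁,F₂,F₃) : ℝ² → H¹`. -/
noncomputable def thetaV (F₁ F₂ F₃ : ℝ × ℝ → ℝ) (p : ℝ × ℝ) : ℝ :=
  pv F₃ p + F₁ p * pv F₂ p - F₂ p * pv F₁ p

/-- `F : U → H¹` is a normal parametrized surface: a smooth embedding with
`θ₀(F_u) = 0`, `|F_u|_{g_{θ₀}} = 1` and `θ₀(F_v) ≠ 0` everywhere on `U`. -/
def IsNormalSurface (U : Set (ℝ × ℝ)) (F₁ F₂ F₃ : ℝ × ℝ → ℝ) : Prop :=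
  ContDiffOn ℝ (⊤ : ℕ∞) F₁ U ∧ ContDiffOn ℝ (⊤ : ℕ∞) F₂ U ∧ ContDiffOn ℝ (⊤ : ℕ∞) F₃ U ∧
  Set.InjOn (fun p => (F₁ p, F₂ p, F₃ p)) U ∧
  (∀ p ∈ U, thetaU F₁ F₂ F₃ p = 0) ∧
  (∀ p ∈ U, (pu F₁ p) ^ 2 + (pu F₂ p) ^ 2 = 1) ∧
  (∀ p ∈ U, thetaV F₁ F₂ F₃ p ≠ 0)

/-- First-kind coefficient `a = ⟨F_v, X⟩`, `X = F_u` (inner product w.r.t. `g_{θ₀}`,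
using `θ₀(F_u) = 0`). -/
noncomputable def coefA (F₁ F₂ F₃ : ℝ × ℝ → ℝ) (p : ℝ × ℝ) : ℝ :=
  pv F₁ p * pu F₁ p + pv F₂ p * pu F₂ p

/-- First-kind coefficient `b = ⟨F_v, Y⟩`, `Y = J₀F_u`. -/
noncomputable def coefB (F₁ F₂ F₃ : ℝ × ℝ → ℝ) (p : ℝ × ℝ) : ℝ :=
  pu F₁ p * pv F₂ p - pu F₂ p * pv F₁ p

/-- First-kind coefficient `c = ⟨F_v, T⟩ = θ₀(F_v)`. -/
noncomputable def coefC (F₁ F₂ F₃ : ℝ × ℝ → ℝ) (p : ℝ × ℝ) : ℝ :=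
  thetaV F₁ F₂ F₃ p

/-- Second-kind coefficient `l = ⟨F_uu, Y⟩` (the p-mean curvature). -/
noncomputable def coefL (F₁ F₂ F₃ : ℝ × ℝ → ℝ) (p : ℝ × ℝ) : ℝ :=
  pu (pu F₂) p * pu F₁ p - pu (pu F₁) p * pu F₂ p

/-- Second-kind coefficient `m = ⟨F_uv, Y⟩`. -/
noncomputable def coefM (F₁ F₂ F₃ : ℝ × ℝ → ℝ) (p : ℝ × ℝ) : ℝ :=
  pv (pu F₂) p * pu F₁ p - pv (pu F₁) p * pu F₂ p

lemma chain_aux (ε : ℝ) (g h : ℝ → ℝ) (hg : ContDiff ℝ (⊤ : ℕ∞) g) (hh : ContDiff ℝ (⊤ : ℕ∞) h)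
    (φ : ℝ × ℝ → ℝ × ℝ) (hφ : ∀ p : ℝ × ℝ, φ p = (ε * p.1 + g p.2, h p.2))
    (f F : ℝ × ℝ → ℝ) (p : ℝ × ℝ) (hf : DifferentiableAt ℝ f (φ p))
    (hFf : F =ᶠ[nhds p] fun q => f (φ q)) :
    pu F p = ε * pu f (φ p) ∧
      pv F p = deriv g p.2 * pu f (φ p) + deriv h p.2 * pv f (φ p) := by
  have hφe : φ = fun q : ℝ × ℝ => (ε * q.1 + g q.2, h q.2) := funext hφ
  set L : (ℝ × ℝ) →L[ℝ] (ℝ × ℝ) :=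
    ((ε • ContinuousLinearMap.fst ℝ ℝ ℝ) + (deriv g p.2) • ContinuousLinearMap.snd ℝ ℝ ℝ).prod
      ((deriv h p.2) • ContinuousLinearMap.snd ℝ ℝ ℝ) with hL
  have h1 : HasFDerivAt (fun q : ℝ × ℝ => ε * q.1 + g q.2)
      ((ε • ContinuousLinearMap.fst ℝ ℝ ℝ) + (deriv g p.2) • ContinuousLinearMap.snd ℝ ℝ ℝ) p := by
    exact (hasFDerivAt_fst.const_mul ε).add
      (HasDerivAt.comp_hasFDerivAt p ((hg.differentiable (by simp) p.2).hasDerivAt) hasFDerivAt_snd)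
  have h2 : HasFDerivAt (fun q : ℝ × ℝ => h q.2)
      ((deriv h p.2) • ContinuousLinearMap.snd ℝ ℝ ℝ) p :=
    HasDerivAt.comp_hasFDerivAt p ((hh.differentiable (by simp) p.2).hasDerivAt) hasFDerivAt_snd
  have hφ' : HasFDerivAt φ L p := by rw [hφe]; exact HasFDerivAt.prodMk h1 h2
  have hcomp : HasFDerivAt (fun q => f (φ q)) ((fderiv ℝ f (φ p)).comp L) p :=
    hf.hasFDerivAt.comp p hφ'
  have hfd : fderiv ℝ F p = (fderiv ℝ f (φ p)).comp L := by
    rw [hFf.fderiv_eq, hcomp.fderiv]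
  have hLu : L (1, 0) = (ε, 0) := by
    simp [hL, ContinuousLinearMap.prod_apply]
  have hLv : L (0, 1) = (deriv g p.2, deriv h p.2) := by
    simp [hL, ContinuousLinearMap.prod_apply]
  constructor
  · show fderiv ℝ F p (1, 0) = _
    rw [hfd, ContinuousLinearMap.comp_apply, hLu]
    have : ((ε, 0) : ℝ × ℝ) = ε • ((1 : ℝ), (0 : ℝ)) := by simp
    rw [this, map_smul]
    rfl
  · show fderiv ℝ F p (0, 1) = _
    rw [hfd, ContinuousLinearMap.comp_apply, hLv]
    have : ((deriv g p.2, deriv h p.2) : ℝ × ℝ)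
        = deriv g p.2 • ((1 : ℝ), (0 : ℝ)) + deriv h p.2 • ((0 : ℝ), (1 : ℝ)) := by simp
    rw [this, map_add, map_smul, map_smul]
    rfl

lemma pu_diffOn {V : Set (ℝ × ℝ)} (hV : IsOpen V) {G : ℝ × ℝ → ℝ}
    (hG : ContDiffOn ℝ (⊤ : ℕ∞) G V) : DifferentiableOn ℝ (pu G) V := by
  have h1 : ContDiffOn ℝ (⊤ : ℕ∞) (fun q => fderiv ℝ G q) V := hG.fderiv_of_isOpen hV (by simp)
  exact (h1.clm_apply contDiffOn_const).differentiableOn (by simp)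

lemma comp_derivs {U V : Set (ℝ × ℝ)} (hUopen : IsOpen U) (hVopen : IsOpen V)
    (ε : ℝ) (g h : ℝ → ℝ) (hg : ContDiff ℝ (⊤ : ℕ∞) g) (hh : ContDiff ℝ (⊤ : ℕ∞) h)
    (φ : ℝ × ℝ → ℝ × ℝ) (hφ : ∀ p : ℝ × ℝ, φ p = (ε * p.1 + g p.2, h p.2))
    (hmaps : Set.MapsTo φ U V)
    (G F : ℝ × ℝ → ℝ) (hGc : ContDiffOn ℝ (⊤ : ℕ∞) G V) (hc : ∀ q ∈ U, F q = G (φ q)) :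
    ∀ p ∈ U,
      pu F p = ε * pu G (φ p) ∧
      pv F p = deriv g p.2 * pu G (φ p) + deriv h p.2 * pv G (φ p) ∧
      pu (pu F) p = ε * (ε * pu (pu G) (φ p)) ∧
      pv (pu F) p = deriv g p.2 * (ε * pu (pu G) (φ p))
          + deriv h p.2 * (ε * pv (pu G) (φ p)) := by
  have hfirst : ∀ q ∈ U, pu F q = ε * pu G (φ q) ∧
      pv F q = deriv g q.2 * pu G (φ q) + deriv h q.2 * pv G (φ q) := by
    intro q hq
    exact chain_aux ε g h hg hh φ hφ G F q
      ((hGc.differentiableOn (by simp)).differentiableAt (hVopen.mem_nhds (hmaps hq)))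
      (Filter.eventually_of_mem (hUopen.mem_nhds hq) hc)
  intro p hp
  have hpuG : DifferentiableAt ℝ (pu G) (φ p) :=
    (pu_diffOn hVopen hGc).differentiableAt (hVopen.mem_nhds (hmaps hp))
  have hfd : DifferentiableAt ℝ (fun r => ε * pu G r) (φ p) := hpuG.const_mul ε
  have hev : pu F =ᶠ[nhds p] fun q => (fun r => ε * pu G r) (φ q) :=
    Filter.eventually_of_mem (hUopen.mem_nhds hp) (fun q hq => (hfirst q hq).1)
  have h2 := chain_aux ε g h hg hh φ hφ (fun r => ε * pu G r) (pu F) p hfd hev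
  have hcm : ∀ w : ℝ × ℝ, fderiv ℝ (fun r => ε * pu G r) (φ p) w
      = ε * fderiv ℝ (pu G) (φ p) w := by
    intro w; rw [fderiv_const_mul hpuG ε]; simp
  have hpu2 : pu (fun r => ε * pu G r) (φ p) = ε * pu (pu G) (φ p) := hcm (1, 0)
  have hpv2 : pv (fun r => ε * pu G r) (φ p) = ε * pv (pu G) (φ p) := hcm (0, 1)
  refine ⟨(hfirst p hp).1, (hfirst p hp).2, ?_, ?_⟩
  · rw [h2.1, hpu2]
  · rw [h2.2, hpu2, hpv2]

/-- **Transformation laws of the coefficients and fundamental forms under a change of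
normal coordinates (Proposition `propofform`).**
If `F = F̃ ∘ φ` for normal parametrized surfaces `F : U → H¹`, `F̃ : Ũ → H¹` and a
diffeomorphism `φ(u,v) = (εu + g(v), h(v))` with `ε = ±1` and `h' ≠ 0`, then
`a = ε(g' + h'·ã∘φ)`, `b = ε h'·(b̃∘φ)`, `c = h'·(c̃∘φ)`, `l = ε(l̃∘φ)`,
`m = g'·(l̃∘φ) + h'·(m̃∘φ)`; consequently the fundamental forms satisfy
`φ*(dũ + ã dṽ) = ε(du + a dv)`, `φ*(b̃ dṽ) = ε b dv`, `φ*(c̃ dṽ) = c dv` and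
`φ*(l̃ dũ + m̃ dṽ) = l du + m dv` (stated by evaluating on a tangent vector
`(ξ, η)`, the differential of `φ` being `(εξ + g'η, h'η)`). -/
theorem normal_coordinates_transformation_laws
    (U V : Set (ℝ × ℝ)) (hUopen : IsOpen U) (hVopen : IsOpen V)
    (F₁ F₂ F₃ G₁ G₂ G₃ : ℝ × ℝ → ℝ)
    (hF : IsNormalSurface U F₁ F₂ F₃) (hG : IsNormalSurface V G₁ G₂ G₃)
    (ε : ℝ) (hε : ε = 1 ∨ ε = -1)
    (g h : ℝ → ℝ) (hg : ContDiff ℝ (⊤ : ℕ∞) g) (hh : ContDiff ℝ (⊤ : ℕ∞) h)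
    (φ : ℝ × ℝ → ℝ × ℝ) (hφ : ∀ p : ℝ × ℝ, φ p = (ε * p.1 + g p.2, h p.2))
    (hh' : ∀ p ∈ U, deriv h p.2 ≠ 0)
    (hmaps : Set.MapsTo φ U V) (hbij : Set.BijOn φ U V)
    (hcomp₁ : ∀ p ∈ U, F₁ p = G₁ (φ p))
    (hcomp₂ : ∀ p ∈ U, F₂ p = G₂ (φ p))
    (hcomp₃ : ∀ p ∈ U, F₃ p = G₃ (φ p)) :
    (∀ p ∈ U,
      coefA F₁ F₂ F₃ p = ε * (deriv g p.2 + deriv h p.2 * coefA G₁ G₂ G₃ (φ p)) ∧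
      coefB F₁ F₂ F₃ p = ε * (deriv h p.2 * coefB G₁ G₂ G₃ (φ p)) ∧
      coefC F₁ F₂ F₃ p = deriv h p.2 * coefC G₁ G₂ G₃ (φ p) ∧
      coefL F₁ F₂ F₃ p = ε * coefL G₁ G₂ G₃ (φ p) ∧
      coefM F₁ F₂ F₃ p =
        deriv g p.2 * coefL G₁ G₂ G₃ (φ p) + deriv h p.2 * coefM G₁ G₂ G₃ (φ p)) ∧
    (∀ p ∈ U, ∀ ξ η : ℝ,
      ((ε * ξ + deriv g p.2 * η) + coefA G₁ G₂ G₃ (φ p) * (deriv h p.2 * η)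
          = ε * (ξ + coefA F₁ F₂ F₃ p * η)) ∧
      (coefB G₁ G₂ G₃ (φ p) * (deriv h p.2 * η) = ε * (coefB F₁ F₂ F₃ p * η)) ∧
      (coefC G₁ G₂ G₃ (φ p) * (deriv h p.2 * η) = coefC F₁ F₂ F₃ p * η) ∧
      (coefL G₁ G₂ G₃ (φ p) * (ε * ξ + deriv g p.2 * η)
          + coefM G₁ G₂ G₃ (φ p) * (deriv h p.2 * η)
          = coefL F₁ F₂ F₃ p * ξ + coefM F₁ F₂ F₃ p * η)) := by
  obtain ⟨hG1, hG2, hG3, _, hGtheta, hGnorm, _⟩ := hG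
  have hε2 : ε * ε = 1 := by rcases hε with rfl | rfl <;> norm_num
  have D1 := comp_derivs hUopen hVopen ε g h hg hh φ hφ hmaps G₁ F₁ hG1 hcomp₁
  have D2 := comp_derivs hUopen hVopen ε g h hg hh φ hφ hmaps G₂ F₂ hG2 hcomp₂
  have D3 := comp_derivs hUopen hVopen ε g h hg hh φ hφ hmaps G₃ F₃ hG3 hcomp₃
  have main : ∀ p ∈ U,
      coefA F₁ F₂ F₃ p = ε * (deriv g p.2 + deriv h p.2 * coefA G₁ G₂ G₃ (φ p)) ∧
      coefB F₁ F₂ F₃ p = ε * (deriv h p.2 * coefB G₁ G₂ G₃ (φ p)) ∧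
      coefC F₁ F₂ F₃ p = deriv h p.2 * coefC G₁ G₂ G₃ (φ p) ∧
      coefL F₁ F₂ F₃ p = ε * coefL G₁ G₂ G₃ (φ p) ∧
      coefM F₁ F₂ F₃ p =
        deriv g p.2 * coefL G₁ G₂ G₃ (φ p) + deriv h p.2 * coefM G₁ G₂ G₃ (φ p) := by
    intro p hp
    obtain ⟨e1, e2, e3, e4⟩ := D1 p hp
    obtain ⟨f1, f2, f3, f4⟩ := D2 p hp
    obtain ⟨k1, k2, k3, k4⟩ := D3 p hp
    have hnorm := hGnorm (φ p) (hmaps hp)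
    have hth := hGtheta (φ p) (hmaps hp)
    simp only [thetaU] at hth
    refine ⟨?_, ?_, ?_, ?_, ?_⟩
    · simp only [coefA]
      rw [e1, e2, f1, f2]
      linear_combination (ε * deriv g p.2) * hnorm
    · simp only [coefB]
      rw [e1, e2, f1, f2]
      ring
    · simp only [coefC, thetaV]
      rw [k2, f2, e2, hcomp₁ p hp, hcomp₂ p hp]
      linear_combination deriv g p.2 * hth
    · simp only [coefL]
      rw [e1, e3, f1, f3]
      linear_combination (ε * (pu (pu G₂) (φ p) * pu G₁ (φ p)
        - pu (pu G₁) (φ p) * pu G₂ (φ p))) * hε2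
    · simp only [coefM, coefL]
      rw [e1, e4, f1, f4]
      linear_combination (deriv g p.2 * (pu (pu G₂) (φ p) * pu G₁ (φ p)
          - pu (pu G₁) (φ p) * pu G₂ (φ p))
        + deriv h p.2 * (pv (pu G₂) (φ p) * pu G₁ (φ p)
          - pv (pu G₁) (φ p) * pu G₂ (φ p))) * hε2
  refine ⟨main, ?_⟩
  intro p hp ξ η
  obtain ⟨ha, hb, hc', hl, hm⟩ := main p hp
  rw [ha, hb, hc', hl, hm]
  refine ⟨?_, ?_, ?_, ?_⟩
  · linear_combination (-((deriv g p.2 + deriv h p.2 * coefA G₁ G₂ G₃ (φ p)) * η)) * hε2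
  · linear_combination (-(deriv h p.2 * coefB G₁ G₂ G₃ (φ p) * η)) * hε2
  · ring
  · ring
end
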